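/- arXiv:1402.0957 — 3 statements merged into one kernel-verified Lean document; each statement's English description precedes it below -/
import Mathlib

section
/- Under the conditions of the basic principal-angle perturbation theorem, with additionally m = 2n, the perturbed leverage scores satisfy the two-sided bound 1 − (sin θ_n √ℓ_j + cos θ₁ √(1−ℓ_j))² ≤ ℓ̃_j ≤ (cos θ₁ √ℓ_j + sin θ_n √(1−ℓ_j))² for each j. -/
open Matrix

/-- Spectral (two-)norm of a real rectangular matrix. -/
noncomputable def spec {m n : ℕ} (A : Matrix (Fin m) (Fin n) ℝ) : ℝ :=
  ‖LinearMap.toContinuousLinearMap (Matrix.toEuclideanLin A)‖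

/-- Frobenius norm. -/
noncomputable def frob {m n : ℕ} (A : Matrix (Fin m) (Fin n) ℝ) : ℝ :=
  Real.sqrt (∑ i, ∑ j, (A i j) ^ 2)

/-- Leverage score: squared Euclidean norm of the j-th row. -/
noncomputable def lev {m n : ℕ} (Q : Matrix (Fin m) (Fin n) ℝ) (j : Fin m) : ℝ :=
  ∑ k, (Q j k) ^ 2

/-- Euclidean norm of the j-th row. -/
noncomputable def rnorm {m n : ℕ} (A : Matrix (Fin m) (Fin n) ℝ) (j : Fin m) : ℝ :=
  Real.sqrt (∑ k, (A j k) ^ 2)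

/-- Moore–Penrose inverse of a full column rank matrix. -/
noncomputable def pinv {m n : ℕ} (A : Matrix (Fin m) (Fin n) ℝ) : Matrix (Fin n) (Fin m) ℝ :=
  (Aᵀ * A)⁻¹ * Aᵀ

/-! Split `e_j = u + w` with `u = QQᵀe_j` and `Qᵀw = 0`, so that `‖u‖² = ℓ_j` and
`‖w‖² = 1 - ℓ_j`. Since `ℓ̃_j = ‖Q̃ᵀe_j‖²` and `1 - ℓ̃_j = ‖(1 - Q̃Q̃ᵀ)e_j‖²`, the triangle
inequality reduces both bounds to bounds for `Q̃ᵀ` and `1 - Q̃Q̃ᵀ` on `range Q` and on its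
orthogonal complement. The SVD shows that `Q̃ᵀQ` has singular values `cos θᵢ` and
`(1 - QQᵀ)Q̃` has singular values `sin θᵢ`, which gives three of the four bounds. The fourth,
`‖(1 - Q̃Q̃ᵀ)w‖ ≤ cos θ₁ ‖w‖`, is where `m = 2n` enters: if `sin θ₁ > 0` then `(1 - QQᵀ)Q̃` is
injective, hence maps `ℝⁿ` onto the `n`-dimensional complement of `range Q`, and so
`‖Q̃ᵀw‖ ≥ sin θ₁ ‖w‖` for every `w` there. -/

section DotProduct

variable {m k : Type*} [Fintype m] [Fintype k]

lemma dotProduct_self_nonneg (v : m → ℝ) : 0 ≤ v ⬝ᵥ v :=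
  Finset.sum_nonneg fun _ _ => mul_self_nonneg _

lemma sq_dotProduct_le (v w : m → ℝ) : (v ⬝ᵥ w) ^ 2 ≤ (v ⬝ᵥ v) * (w ⬝ᵥ w) := by
  simpa [dotProduct, pow_two] using Finset.sum_mul_sq_le_sq_mul_sq Finset.univ v w

lemma mulVec_dotProduct_eq_dotProduct_transpose_mulVec (A : Matrix m k ℝ) (x : k → ℝ)
    (y : m → ℝ) : (A *ᵥ x) ⬝ᵥ y = x ⬝ᵥ (Aᵀ *ᵥ y) := by
  rw [dotProduct_comm, dotProduct_mulVec, ← mulVec_transpose, dotProduct_comm]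

lemma add_dotProduct_self_le {a b : m → ℝ} {α β : ℝ} (hα : 0 ≤ α) (hβ : 0 ≤ β)
    (ha : a ⬝ᵥ a ≤ α ^ 2) (hb : b ⬝ᵥ b ≤ β ^ 2) : (a + b) ⬝ᵥ (a + b) ≤ (α + β) ^ 2 := by
  have hab : a ⬝ᵥ b ≤ α * β := by
    nlinarith [sq_dotProduct_le a b, dotProduct_self_nonneg a, dotProduct_self_nonneg b,
      mul_nonneg hα hβ]
  have hexp : (a + b) ⬝ᵥ (a + b) = a ⬝ᵥ a + 2 * (a ⬝ᵥ b) + b ⬝ᵥ b := by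
    rw [add_dotProduct, dotProduct_add, dotProduct_add, dotProduct_comm b a]; ring
  rw [hexp]; nlinarith

lemma transpose_mulVec_dotProduct_self_le (M : Matrix m k ℝ) {c : ℝ} (hc : 0 ≤ c)
    (hM : ∀ z, (M *ᵥ z) ⬝ᵥ (M *ᵥ z) ≤ c * (z ⬝ᵥ z)) (w : m → ℝ) :
    (Mᵀ *ᵥ w) ⬝ᵥ (Mᵀ *ᵥ w) ≤ c * (w ⬝ᵥ w) := by
  set v := Mᵀ *ᵥ w
  have hcs : (v ⬝ᵥ v) ^ 2 ≤ (w ⬝ᵥ w) * (c * (v ⬝ᵥ v)) := by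
    have hvv : v ⬝ᵥ v = w ⬝ᵥ (M *ᵥ v) := by
      rw [dotProduct_comm, mulVec_dotProduct_eq_dotProduct_transpose_mulVec, transpose_transpose]
    calc (v ⬝ᵥ v) ^ 2 ≤ (w ⬝ᵥ w) * ((M *ᵥ v) ⬝ᵥ (M *ᵥ v)) := hvv ▸ sq_dotProduct_le _ _
      _ ≤ (w ⬝ᵥ w) * (c * (v ⬝ᵥ v)) :=
        mul_le_mul_of_nonneg_left (hM v) (dotProduct_self_nonneg w)
  rcases (dotProduct_self_nonneg v).eq_or_lt with h | h
  · rw [← h]; exact mul_nonneg hc (dotProduct_self_nonneg w)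
  · nlinarith

lemma mul_dotProduct_self_le_transpose_mulVec (M : Matrix m k ℝ) {a : ℝ}
    (hM : ∀ z, a * (z ⬝ᵥ z) ≤ (M *ᵥ z) ⬝ᵥ (M *ᵥ z)) (z : k → ℝ) :
    a * ((M *ᵥ z) ⬝ᵥ (M *ᵥ z)) ≤ (Mᵀ *ᵥ (M *ᵥ z)) ⬝ᵥ (Mᵀ *ᵥ (M *ᵥ z)) := by
  set p := (M *ᵥ z) ⬝ᵥ (M *ᵥ z)
  set r := (Mᵀ *ᵥ (M *ᵥ z)) ⬝ᵥ (Mᵀ *ᵥ (M *ᵥ z))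
  have hcs : p ^ 2 ≤ (z ⬝ᵥ z) * r := by
    have : p = z ⬝ᵥ (Mᵀ *ᵥ (M *ᵥ z)) := mulVec_dotProduct_eq_dotProduct_transpose_mulVec _ _ _
    exact this ▸ sq_dotProduct_le _ _
  have hp := dotProduct_self_nonneg (M *ᵥ z)
  have hr := dotProduct_self_nonneg (Mᵀ *ᵥ (M *ᵥ z))
  rcases (dotProduct_self_nonneg z).eq_or_lt with h | h
  · have hp0 : p = 0 := pow_eq_zero_iff two_ne_zero |>.mp <|
      le_antisymm (by rwa [← h, zero_mul] at hcs) (sq_nonneg p)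
    rw [hp0, mul_zero]; exact hr
  · nlinarith [hM z]

end DotProduct

section OrthonormalColumns

variable {m k l : Type*} [Fintype m] [Fintype k]

lemma mulVec_dotProduct_self_of_transpose_mul_self [DecidableEq k] {Q : Matrix m k ℝ}
    (hQ : Qᵀ * Q = 1) (y : k → ℝ) : (Q *ᵥ y) ⬝ᵥ (Q *ᵥ y) = y ⬝ᵥ y := by
  rw [mulVec_dotProduct_eq_dotProduct_transpose_mulVec, mulVec_mulVec, hQ, one_mulVec]

lemma sub_mulVec_dotProduct_self [DecidableEq k] {Q : Matrix m k ℝ} (hQ : Qᵀ * Q = 1)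
    (x : m → ℝ) :
    (x - Q *ᵥ (Qᵀ *ᵥ x)) ⬝ᵥ (x - Q *ᵥ (Qᵀ *ᵥ x)) = x ⬝ᵥ x - (Qᵀ *ᵥ x) ⬝ᵥ (Qᵀ *ᵥ x) := by
  have hcross : x ⬝ᵥ (Q *ᵥ (Qᵀ *ᵥ x)) = (Qᵀ *ᵥ x) ⬝ᵥ (Qᵀ *ᵥ x) := by
    rw [dotProduct_comm, mulVec_dotProduct_eq_dotProduct_transpose_mulVec]
  rw [sub_dotProduct, dotProduct_sub, dotProduct_sub, dotProduct_comm (Q *ᵥ _) x, hcross,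
    mulVec_dotProduct_self_of_transpose_mul_self hQ]
  ring

lemma transpose_mulVec_sub_mulVec_eq_zero [DecidableEq k] {Q : Matrix m k ℝ}
    (hQ : Qᵀ * Q = 1) (x : m → ℝ) : Qᵀ *ᵥ (x - Q *ᵥ (Qᵀ *ᵥ x)) = 0 := by
  rw [mulVec_sub, mulVec_mulVec, hQ, one_mulVec, sub_self]

lemma sum_transpose_mulVec_sq [DecidableEq m] {V : Matrix m k ℝ} (hV : V * Vᵀ = 1)
    (z : m → ℝ) : ∑ i, (Vᵀ *ᵥ z) i ^ 2 = z ⬝ᵥ z := by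
  rw [← mulVec_dotProduct_self_of_transpose_mul_self (Q := Vᵀ) (by rwa [transpose_transpose])]
  simp only [dotProduct, sq]

variable [DecidableEq m]

lemma one_sub_mul_transpose_mulVec (Q : Matrix m k ℝ) (x : m → ℝ) :
    (1 - Q * Qᵀ) *ᵥ x = x - Q *ᵥ (Qᵀ *ᵥ x) := by
  rw [sub_mulVec, one_mulVec, mulVec_mulVec]

lemma one_sub_mul_transpose_mul_mulVec_dotProduct_self [DecidableEq k] {Q R : Matrix m k ℝ}
    (hQ : Qᵀ * Q = 1) (hR : Rᵀ * R = 1) (z : k → ℝ) :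
    (((1 - Q * Qᵀ) * R) *ᵥ z) ⬝ᵥ (((1 - Q * Qᵀ) * R) *ᵥ z) =
      z ⬝ᵥ z - ((Qᵀ * R) *ᵥ z) ⬝ᵥ ((Qᵀ * R) *ᵥ z) := by
  rw [← mulVec_mulVec, one_sub_mul_transpose_mulVec, sub_mulVec_dotProduct_self hQ,
    mulVec_dotProduct_self_of_transpose_mul_self hR, mulVec_mulVec]

lemma transpose_one_sub_mul_transpose_mul_mulVec {Q : Matrix m k ℝ} (R : Matrix m l ℝ)
    {w : m → ℝ} (hw : Qᵀ *ᵥ w = 0) : ((1 - Q * Qᵀ) * R)ᵀ *ᵥ w = Rᵀ *ᵥ w := by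
  rw [transpose_mul, ← mulVec_mulVec, transpose_sub, transpose_one, transpose_mul,
    transpose_transpose, one_sub_mul_transpose_mulVec, hw, mulVec_zero, sub_zero]

end OrthonormalColumns

section SingularValueDecomposition

variable {m k l : Type*} [Fintype k] [DecidableEq k]

lemma transpose_svd (U V : Matrix m k ℝ) (d : k → ℝ) :
    (U * diagonal d * Vᵀ)ᵀ = V * diagonal d * Uᵀ := by
  rw [transpose_mul, transpose_mul, transpose_transpose, diagonal_transpose, Matrix.mul_assoc]

lemma svd_mulVec_dotProduct_self [Fintype m] [Fintype l] {U : Matrix m k ℝ}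
    (V : Matrix l k ℝ) (hU : Uᵀ * U = 1) (d : k → ℝ) (z : l → ℝ) :
    ((U * diagonal d * Vᵀ) *ᵥ z) ⬝ᵥ ((U * diagonal d * Vᵀ) *ᵥ z) =
      ∑ i, d i ^ 2 * (Vᵀ *ᵥ z) i ^ 2 := by
  rw [← mulVec_mulVec, ← mulVec_mulVec, mulVec_dotProduct_self_of_transpose_mul_self hU]
  simp only [dotProduct, mulVec_diagonal]
  exact Finset.sum_congr rfl fun i _ => by ring

lemma svd_mulVec_dotProduct_self_le [Fintype m] [Fintype l] [DecidableEq l]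
    {U : Matrix m k ℝ} {V : Matrix l k ℝ} (hU : Uᵀ * U = 1) (hV : V * Vᵀ = 1)
    {d : k → ℝ} {c : ℝ} (hd : ∀ i, d i ^ 2 ≤ c) (z : l → ℝ) :
    ((U * diagonal d * Vᵀ) *ᵥ z) ⬝ᵥ ((U * diagonal d * Vᵀ) *ᵥ z) ≤ c * (z ⬝ᵥ z) := by
  rw [svd_mulVec_dotProduct_self V hU, ← sum_transpose_mulVec_sq hV, Finset.mul_sum]
  exact Finset.sum_le_sum fun i _ => mul_le_mul_of_nonneg_right (hd i) (sq_nonneg _)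

lemma mul_dotProduct_self_le_svd_mulVec [Fintype m] [Fintype l] [DecidableEq l]
    {U : Matrix m k ℝ} {V : Matrix l k ℝ} (hU : Uᵀ * U = 1) (hV : V * Vᵀ = 1)
    {d : k → ℝ} {a : ℝ} (hd : ∀ i, a ≤ d i ^ 2) (z : l → ℝ) :
    a * (z ⬝ᵥ z) ≤ ((U * diagonal d * Vᵀ) *ᵥ z) ⬝ᵥ ((U * diagonal d * Vᵀ) *ᵥ z) := by
  rw [svd_mulVec_dotProduct_self V hU, ← sum_transpose_mulVec_sq hV, Finset.mul_sum]
  exact Finset.sum_le_sum fun i _ => mul_le_mul_of_nonneg_right (hd i) (sq_nonneg _)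

end SingularValueDecomposition

section Complement

variable {m k l : Type*} [Fintype m] [Fintype k] [Fintype l] [DecidableEq k]

lemma exists_mulVec_eq_of_transpose_mulVec_eq_zero {Q : Matrix m k ℝ} {M : Matrix m l ℝ}
    (hQ : Qᵀ * Q = 1) (hQM : Qᵀ * M = 0) (hM : Function.Injective M.mulVec)
    (hcard : Fintype.card m ≤ Fintype.card k + Fintype.card l) {w : m → ℝ}
    (hw : Qᵀ *ᵥ w = 0) : ∃ z, M *ᵥ z = w := by
  have hsurj : LinearMap.range Qᵀ.mulVecLin = ⊤ :=
    LinearMap.range_eq_top.2 fun y =>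
      ⟨Q *ᵥ y, by simp only [mulVecLin_apply, mulVec_mulVec, hQ, one_mulVec]⟩
  have hle : LinearMap.range M.mulVecLin ≤ LinearMap.ker Qᵀ.mulVecLin := by
    rintro _ ⟨z, rfl⟩
    simp only [LinearMap.mem_ker, mulVecLin_apply, mulVec_mulVec, hQM, zero_mulVec]
  have heq : LinearMap.range M.mulVecLin = LinearMap.ker Qᵀ.mulVecLin := by
    refine Submodule.eq_of_le_of_finrank_le hle ?_
    have hker := LinearMap.finrank_range_add_finrank_ker Qᵀ.mulVecLin
    rw [hsurj, finrank_top] at hker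
    rw [LinearMap.finrank_range_of_inj hM]
    simp only [Module.finrank_fintype_fun_eq_card] at hker ⊢
    omega
  have hw' : w ∈ LinearMap.ker Qᵀ.mulVecLin := hw
  rw [← heq] at hw'
  exact hw'

lemma mul_dotProduct_self_le_transpose_mulVec_of_transpose_mulVec_eq_zero {Q : Matrix m k ℝ}
    {M : Matrix m l ℝ} (hQ : Qᵀ * Q = 1) (hQM : Qᵀ * M = 0)
    (hcard : Fintype.card m ≤ Fintype.card k + Fintype.card l) {a : ℝ}
    (hM : ∀ z, a * (z ⬝ᵥ z) ≤ (M *ᵥ z) ⬝ᵥ (M *ᵥ z)) {w : m → ℝ} (hw : Qᵀ *ᵥ w = 0) :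
    a * (w ⬝ᵥ w) ≤ (Mᵀ *ᵥ w) ⬝ᵥ (Mᵀ *ᵥ w) := by
  rcases le_or_gt a 0 with ha | ha
  · exact (mul_nonpos_of_nonpos_of_nonneg ha (dotProduct_self_nonneg w)).trans
      (dotProduct_self_nonneg _)
  have hinj : Function.Injective M.mulVec := by
    refine (injective_iff_map_eq_zero M.mulVecLin).2 fun z hz => ?_
    have hz' := hM z
    rw [mulVecLin_apply] at hz
    rw [hz, zero_dotProduct] at hz'
    exact dotProduct_self_eq_zero.1 <|
      le_antisymm (nonpos_of_mul_nonpos_right hz' ha) (dotProduct_self_nonneg z)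
  obtain ⟨z, rfl⟩ := exists_mulVec_eq_of_transpose_mulVec_eq_zero hQ hQM hinj hcard hw
  exact mul_dotProduct_self_le_transpose_mulVec M hM z

end Complement

section Split

variable {m k l : Type*} [Fintype m] [Fintype k] [Fintype l] [DecidableEq k]

lemma mulVec_dotProduct_self_le_of_bounds_on_range_and_kernel {Q : Matrix m k ℝ}
    (hQ : Qᵀ * Q = 1) (T : Matrix l m ℝ) {α β : ℝ} (hα : 0 ≤ α) (hβ : 0 ≤ β)
    (hrange : ∀ y, (T *ᵥ (Q *ᵥ y)) ⬝ᵥ (T *ᵥ (Q *ᵥ y)) ≤ α ^ 2 * (y ⬝ᵥ y))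
    (hker : ∀ w, Qᵀ *ᵥ w = 0 → (T *ᵥ w) ⬝ᵥ (T *ᵥ w) ≤ β ^ 2 * (w ⬝ᵥ w)) (x : m → ℝ) :
    (T *ᵥ x) ⬝ᵥ (T *ᵥ x) ≤ (α * √((Qᵀ *ᵥ x) ⬝ᵥ (Qᵀ *ᵥ x)) +
      β * √(x ⬝ᵥ x - (Qᵀ *ᵥ x) ⬝ᵥ (Qᵀ *ᵥ x))) ^ 2 := by
  set y := Qᵀ *ᵥ x
  set w := x - Q *ᵥ y
  have hww : w ⬝ᵥ w = x ⬝ᵥ x - y ⬝ᵥ y := sub_mulVec_dotProduct_self hQ x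
  have hsplit : T *ᵥ x = T *ᵥ (Q *ᵥ y) + T *ᵥ w := by
    rw [← mulVec_add, add_sub_cancel]
  rw [hsplit]
  refine add_dotProduct_self_le (by positivity) (by positivity) ?_ ?_
  · rw [mul_pow, Real.sq_sqrt (dotProduct_self_nonneg y)]
    exact hrange y
  · rw [mul_pow, Real.sq_sqrt (hww ▸ dotProduct_self_nonneg w), ← hww]
    exact hker w (transpose_mulVec_sub_mulVec_eq_zero hQ x)

end Split

section PrincipalAngles

variable {m k p : Type*} [Fintype m] [DecidableEq m] [Fintype k] [DecidableEq k]
  [Fintype p] [DecidableEq p]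

lemma one_sub_mul_transpose_mul_mulVec_dotProduct_self_le {Q R : Matrix m k ℝ}
    (hQ : Qᵀ * Q = 1) (hR : Rᵀ * R = 1) {U V : Matrix k p ℝ} (hU : Uᵀ * U = 1)
    (hV : V * Vᵀ = 1) {d : p → ℝ} (hsvd : Qᵀ * R = U * diagonal d * Vᵀ) {s : ℝ}
    (hds : ∀ i, 1 - s ^ 2 ≤ d i ^ 2) (z : k → ℝ) :
    (((1 - Q * Qᵀ) * R) *ᵥ z) ⬝ᵥ (((1 - Q * Qᵀ) * R) *ᵥ z) ≤ s ^ 2 * (z ⬝ᵥ z) := by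
  rw [one_sub_mul_transpose_mul_mulVec_dotProduct_self hQ hR, hsvd]
  linarith [mul_dotProduct_self_le_svd_mulVec hU hV hds z]

lemma le_one_sub_mul_transpose_mul_mulVec_dotProduct_self {Q R : Matrix m k ℝ}
    (hQ : Qᵀ * Q = 1) (hR : Rᵀ * R = 1) {U V : Matrix k p ℝ} (hU : Uᵀ * U = 1)
    (hV : V * Vᵀ = 1) {d : p → ℝ} (hsvd : Qᵀ * R = U * diagonal d * Vᵀ) {c : ℝ}
    (hdc : ∀ i, d i ^ 2 ≤ c ^ 2) (z : k → ℝ) :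
    (1 - c ^ 2) * (z ⬝ᵥ z) ≤ (((1 - Q * Qᵀ) * R) *ᵥ z) ⬝ᵥ (((1 - Q * Qᵀ) * R) *ᵥ z) := by
  rw [one_sub_mul_transpose_mul_mulVec_dotProduct_self hQ hR, hsvd]
  linarith [svd_mulVec_dotProduct_self_le hU hV hdc z]

variable {Q Qt : Matrix m k ℝ} {U V : Matrix k k ℝ} {d : k → ℝ} {c s : ℝ}

theorem transpose_mulVec_dotProduct_self_le_of_svd (hQ : Qᵀ * Q = 1) (hQt : Qtᵀ * Qt = 1)
    (hU1 : Uᵀ * U = 1) (hU2 : U * Uᵀ = 1) (hV1 : Vᵀ * V = 1) (hV2 : V * Vᵀ = 1)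
    (hsvd : Qᵀ * Qt = U * diagonal d * Vᵀ) (hc : 0 ≤ c) (hs : 0 ≤ s)
    (hdc : ∀ i, d i ^ 2 ≤ c ^ 2) (hds : ∀ i, 1 - s ^ 2 ≤ d i ^ 2) (x : m → ℝ) :
    (Qtᵀ *ᵥ x) ⬝ᵥ (Qtᵀ *ᵥ x) ≤ (c * √((Qᵀ *ᵥ x) ⬝ᵥ (Qᵀ *ᵥ x)) +
      s * √(x ⬝ᵥ x - (Qᵀ *ᵥ x) ⬝ᵥ (Qᵀ *ᵥ x))) ^ 2 := by
  have hsvd_transpose : Qtᵀ * Q = V * diagonal d * Uᵀ := by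
    rw [← transpose_svd, ← hsvd, transpose_mul, transpose_transpose]
  refine mulVec_dotProduct_self_le_of_bounds_on_range_and_kernel hQ _ hc hs (fun y => ?_)
    (fun w hw => ?_) x
  · rw [mulVec_mulVec, hsvd_transpose]
    exact svd_mulVec_dotProduct_self_le hV1 hU2 hdc y
  · rw [← transpose_one_sub_mul_transpose_mul_mulVec Qt hw]
    exact transpose_mulVec_dotProduct_self_le _ (sq_nonneg s)
      (one_sub_mul_transpose_mul_mulVec_dotProduct_self_le hQ hQt hU1 hV2 hsvd hds) w

theorem one_sub_mul_transpose_mulVec_dotProduct_self_le_of_svd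
    (hcard : Fintype.card m ≤ Fintype.card k + Fintype.card k)
    (hQ : Qᵀ * Q = 1) (hQt : Qtᵀ * Qt = 1)
    (hU1 : Uᵀ * U = 1) (hU2 : U * Uᵀ = 1) (hV1 : Vᵀ * V = 1) (hV2 : V * Vᵀ = 1)
    (hsvd : Qᵀ * Qt = U * diagonal d * Vᵀ) (hc : 0 ≤ c) (hs : 0 ≤ s)
    (hdc : ∀ i, d i ^ 2 ≤ c ^ 2) (hds : ∀ i, 1 - s ^ 2 ≤ d i ^ 2) (x : m → ℝ) :
    x ⬝ᵥ x - (Qtᵀ *ᵥ x) ⬝ᵥ (Qtᵀ *ᵥ x) ≤ (s * √((Qᵀ *ᵥ x) ⬝ᵥ (Qᵀ *ᵥ x)) +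
      c * √(x ⬝ᵥ x - (Qᵀ *ᵥ x) ⬝ᵥ (Qᵀ *ᵥ x))) ^ 2 := by
  have hsvd_transpose : Qtᵀ * Q = V * diagonal d * Uᵀ := by
    rw [← transpose_svd, ← hsvd, transpose_mul, transpose_transpose]
  have hQM : Qᵀ * ((1 - Q * Qᵀ) * Qt) = 0 := by
    rw [← Matrix.mul_assoc, Matrix.mul_sub, Matrix.mul_one, ← Matrix.mul_assoc, hQ,
      Matrix.one_mul, sub_self, Matrix.zero_mul]
  rw [← sub_mulVec_dotProduct_self hQt, ← one_sub_mul_transpose_mulVec]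
  refine mulVec_dotProduct_self_le_of_bounds_on_range_and_kernel hQ _ hs hc (fun y => ?_)
    (fun w hw => ?_) x
  · rw [mulVec_mulVec]
    exact one_sub_mul_transpose_mul_mulVec_dotProduct_self_le hQt hQ hV1 hU2 hsvd_transpose hds y
  · have hlow := mul_dotProduct_self_le_transpose_mulVec_of_transpose_mulVec_eq_zero hQ hQM
      hcard (le_one_sub_mul_transpose_mul_mulVec_dotProduct_self hQ hQt hU1 hV2 hsvd hdc) hw
    rw [transpose_one_sub_mul_transpose_mul_mulVec Qt hw] at hlow
    rw [one_sub_mul_transpose_mulVec, sub_mulVec_dotProduct_self hQt]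
    linarith

end PrincipalAngles

lemma lev_eq_dotProduct {m n : ℕ} (Q : Matrix (Fin m) (Fin n) ℝ) (j : Fin m) :
    lev Q j = (Qᵀ *ᵥ Pi.single j 1) ⬝ᵥ (Qᵀ *ᵥ Pi.single j 1) := by
  simp [lev, dotProduct, sq]

lemma cos_sq_le_cos_sq {x y : ℝ} (hx : 0 ≤ x) (hxy : x ≤ y) (hy : y ≤ Real.pi / 2) :
    Real.cos y ^ 2 ≤ Real.cos x ^ 2 := by
  have hpi := Real.pi_pos
  exact pow_le_pow_left₀ (Real.cos_nonneg_of_mem_Icc ⟨by linarith, hy⟩)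
    (Real.cos_le_cos_of_nonneg_of_le_pi hx (by linarith) hxy) 2

theorem stmt6 {n : ℕ} (hn : 0 < n)
    (Q Qt : Matrix (Fin (2 * n)) (Fin n) ℝ)
    (hQ : Qᵀ * Q = 1) (hQt : Qtᵀ * Qt = 1)
    (U V : Matrix (Fin n) (Fin n) ℝ) (θ : Fin n → ℝ)
    (hU1 : Uᵀ * U = 1) (hU2 : U * Uᵀ = 1) (hV1 : Vᵀ * V = 1) (hV2 : V * Vᵀ = 1)
    (hθ0 : ∀ i, 0 ≤ θ i) (hθ1 : ∀ i, θ i ≤ Real.pi / 2) (hmono : Monotone θ)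
    (hsvd : Qᵀ * Qt = U * (Matrix.diagonal fun i => Real.cos (θ i)) * Vᵀ) :
    ∀ j, 1 - (Real.sin (θ ⟨n - 1, by omega⟩) * Real.sqrt (lev Q j)
          + Real.cos (θ ⟨0, hn⟩) * Real.sqrt (1 - lev Q j)) ^ 2 ≤ lev Qt j ∧
      lev Qt j ≤ (Real.cos (θ ⟨0, hn⟩) * Real.sqrt (lev Q j)
          + Real.sin (θ ⟨n - 1, by omega⟩) * Real.sqrt (1 - lev Q j)) ^ 2 := by
  intro j
  have hpi := Real.pi_pos
  have hc : 0 ≤ Real.cos (θ ⟨0, hn⟩) :=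
    Real.cos_nonneg_of_mem_Icc ⟨by linarith [hθ0 ⟨0, hn⟩], hθ1 _⟩
  have hs : 0 ≤ Real.sin (θ ⟨n - 1, by omega⟩) :=
    Real.sin_nonneg_of_nonneg_of_le_pi (hθ0 _) (by linarith [hθ1 ⟨n - 1, by omega⟩])
  have hdc : ∀ i, Real.cos (θ i) ^ 2 ≤ Real.cos (θ ⟨0, hn⟩) ^ 2 := fun i =>
    cos_sq_le_cos_sq (hθ0 _) (hmono (Fin.le_def.2 (Nat.zero_le _))) (hθ1 i)
  have hds : ∀ i, 1 - Real.sin (θ ⟨n - 1, by omega⟩) ^ 2 ≤ Real.cos (θ i) ^ 2 := fun i => by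
    rw [← Real.cos_sq']
    exact cos_sq_le_cos_sq (hθ0 i) (hmono (Fin.le_def.2 (Nat.le_pred_of_lt i.isLt))) (hθ1 _)
  have hcard : Fintype.card (Fin (2 * n)) ≤ Fintype.card (Fin n) + Fintype.card (Fin n) := by
    simp only [Fintype.card_fin]; omega
  have hunit : (Pi.single j 1 : Fin (2 * n) → ℝ) ⬝ᵥ Pi.single j 1 = 1 := by simp
  have hlow := one_sub_mul_transpose_mulVec_dotProduct_self_le_of_svd hcard hQ hQt hU1 hU2 hV1
    hV2 hsvd hc hs hdc hds (Pi.single j 1)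
  have hup := transpose_mulVec_dotProduct_self_le_of_svd hQ hQt hU1 hU2 hV1 hV2 hsvd hc hs
    hdc hds (Pi.single j 1)
  rw [hunit, ← lev_eq_dotProduct, ← lev_eq_dotProduct] at hlow hup
  exact ⟨by linarith, hup⟩
end

section
/- Let A and ΔA be real m×n matrices with rank(A) = n and ‖ΔA‖₂‖A†‖₂ ≤ 1/2, and set ε = ‖ΔA‖₂/‖A‖₂ and κ = κ₂(A). Then for each j with ℓ_j > 0, |ℓ̃_j − ℓ_j|/ℓ_j ≤ (2√((1−ℓ_j)/ℓ_j) + κ ε/ℓ_j) κ ε. -/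
open Matrix

/-!
Let `P`, `P̃` be the orthogonal projections onto `U = range A` and `V = range (A + ΔA)`, so that
`ℓ_j = ‖P e_j‖²` and `ℓ̃_j = ‖P̃ e_j‖²`, and let `t = ‖ΔA‖‖A†‖ = κ₂(A) ε`. Every `u ∈ U` is
`u = A y` with `y = A† u`, and `u + ΔA y ∈ V`, so `u` lies within `t‖u‖` of `V`. As `U` and `V`
have the same dimension and `t < 1`, `P̃` maps `U` onto `V`, which turns this into the bound
`‖v - P v‖ ≤ t‖v‖` for `v ∈ V`. Splitting `e_j = p + q` with `p = P e_j`, `q ⊥ U` gives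
`‖P̃ e_j‖² - ‖p‖² = ‖P̃ q‖² - ‖p - P̃ p‖² + 2⟪P̃ p - p, q⟫`; the first two terms are at most `t²`
and the last is at most `2t‖p‖‖q‖ = 2t √ℓ_j √(1 - ℓ_j)`. Dividing by `ℓ_j` gives the claim.
-/

namespace Submodule

variable {E : Type*} [NormedAddCommGroup E] [InnerProductSpace ℝ E] {U V : Submodule ℝ E} {t : ℝ}

theorem norm_sub_starProjection_sq (K : Submodule ℝ E) [K.HasOrthogonalProjection] (x : E) :
    ‖x - K.starProjection x‖ ^ 2 = ‖x‖ ^ 2 - ‖K.starProjection x‖ ^ 2 := by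
  rw [norm_sq_eq_add_norm_sq_starProjection x K, starProjection_orthogonal_val]
  ring

theorem norm_sub_starProjection_le (K : Submodule ℝ E) [K.HasOrthogonalProjection] (x : E) :
    ‖x - K.starProjection x‖ ≤ ‖x‖ := by
  rw [← starProjection_orthogonal_val]
  exact Kᗮ.norm_starProjection_apply_le x

theorem real_inner_starProjection_eq_norm_sq (K : Submodule ℝ E) [K.HasOrthogonalProjection]
    (x : E) :
    inner ℝ x (K.starProjection x) = ‖K.starProjection x‖ ^ 2 := by
  calc inner ℝ x (K.starProjection x) = inner ℝ x (K.starProjection (K.starProjection x)) := by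
        rw [starProjection_eq_self_iff.2 (K.starProjection_apply_mem x)]
    _ = ‖K.starProjection x‖ ^ 2 := by
        rw [← inner_starProjection_left_eq_right, real_inner_self_eq_norm_sq]

theorem one_sub_sq_mul_norm_sq_le_norm_starProjection_sq [V.HasOrthogonalProjection]
    (hUV : ∀ u ∈ U, ‖u - V.starProjection u‖ ≤ t * ‖u‖)
    {u : E} (hu : u ∈ U) : (1 - t ^ 2) * ‖u‖ ^ 2 ≤ ‖V.starProjection u‖ ^ 2 := by
  have := pow_le_pow_left₀ (norm_nonneg _) (hUV u hu) 2
  rw [norm_sub_starProjection_sq] at this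
  linarith [mul_pow t ‖u‖ 2]

theorem exists_starProjection_eq_of_finrank_eq [FiniteDimensional ℝ E]
    [V.HasOrthogonalProjection] (hdim : Module.finrank ℝ U = Module.finrank ℝ V) (ht : t ^ 2 < 1)
    (hUV : ∀ u ∈ U, ‖u - V.starProjection u‖ ≤ t * ‖u‖) :
    ∀ v ∈ V, ∃ u ∈ U, V.starProjection u = v := by
  let L : U →ₗ[ℝ] V := (V.orthogonalProjectionOnto ∘L U.subtypeL : U →L[ℝ] V)
  have hinj : Function.Injective L := by
    refine (injective_iff_map_eq_zero L).2 fun u hu => ?_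
    have h0 : V.starProjection (u : E) = 0 := congrArg Subtype.val hu
    have := one_sub_sq_mul_norm_sq_le_norm_starProjection_sq hUV u.2
    rw [h0, norm_zero] at this
    have : ‖(u : E)‖ ^ 2 ≤ 0 := by nlinarith
    exact Subtype.ext (by simpa using this)
  intro v hv
  obtain ⟨u, hu⟩ :=
    (LinearMap.injective_iff_surjective_of_finrank_eq_finrank hdim).1 hinj ⟨v, hv⟩
  exact ⟨u, u.2, congrArg Subtype.val hu⟩

theorem norm_sub_starProjection_le_of_finrank_eq [FiniteDimensional ℝ E]
    [U.HasOrthogonalProjection] [V.HasOrthogonalProjection]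
    (hdim : Module.finrank ℝ U = Module.finrank ℝ V) (ht0 : 0 ≤ t) (ht : t ^ 2 < 1)
    (hUV : ∀ u ∈ U, ‖u - V.starProjection u‖ ≤ t * ‖u‖) :
    ∀ v ∈ V, ‖v - U.starProjection v‖ ≤ t * ‖v‖ := by
  intro v hv
  obtain ⟨u, hu, rfl⟩ := exists_starProjection_eq_of_finrank_eq hdim ht hUV v hv
  set w := V.starProjection u
  have hlow := one_sub_sq_mul_norm_sq_le_norm_starProjection_sq hUV hu
  have hinner : ‖w‖ ^ 2 ≤ ‖u‖ * ‖U.starProjection w‖ := by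
    calc ‖w‖ ^ 2 = inner ℝ u w := (real_inner_starProjection_eq_norm_sq V u).symm
      _ = inner ℝ (U.starProjection u) w := by rw [starProjection_eq_self_iff.2 hu]
      _ = inner ℝ u (U.starProjection w) := inner_starProjection_left_eq_right U u w
      _ ≤ ‖u‖ * ‖U.starProjection w‖ := real_inner_le_norm _ _
  have hsq : (1 - t ^ 2) * ‖w‖ ^ 2 ≤ ‖U.starProjection w‖ ^ 2 := by
    rcases (norm_nonneg w).eq_or_lt with hw | hw
    · rw [← hw, zero_pow two_ne_zero, mul_zero]; positivity
    · have h4 : (1 - t ^ 2) * ‖w‖ ^ 4 ≤ ‖w‖ ^ 2 * ‖U.starProjection w‖ ^ 2 := by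
        calc (1 - t ^ 2) * ‖w‖ ^ 4 = (1 - t ^ 2) * (‖w‖ ^ 2) ^ 2 := by ring
          _ ≤ (1 - t ^ 2) * (‖u‖ * ‖U.starProjection w‖) ^ 2 := by gcongr
          _ = ((1 - t ^ 2) * ‖u‖ ^ 2) * ‖U.starProjection w‖ ^ 2 := by ring
          _ ≤ ‖w‖ ^ 2 * ‖U.starProjection w‖ ^ 2 := by gcongr
      nlinarith [pow_pos hw 2]
  refine le_of_pow_le_pow_left₀ two_ne_zero (by positivity) ?_
  rw [norm_sub_starProjection_sq, mul_pow]
  linarith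

theorem norm_starProjection_le_of_mem_orthogonal [U.HasOrthogonalProjection]
    [V.HasOrthogonalProjection] (ht0 : 0 ≤ t)
    (hVU : ∀ v ∈ V, ‖v - U.starProjection v‖ ≤ t * ‖v‖) {q : E} (hq : q ∈ Uᗮ) :
    ‖V.starProjection q‖ ≤ t * ‖q‖ := by
  set v := V.starProjection q
  have hq' : inner ℝ q (U.starProjection v) = 0 :=
    inner_left_of_mem_orthogonal (U.starProjection_apply_mem v) hq
  have h : ‖v‖ * ‖v‖ ≤ t * ‖q‖ * ‖v‖ := by
    calc ‖v‖ * ‖v‖ = inner ℝ q (v - U.starProjection v) := by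
          rw [inner_sub_right, hq', sub_zero, real_inner_starProjection_eq_norm_sq, sq]
      _ ≤ ‖q‖ * ‖v - U.starProjection v‖ := real_inner_le_norm _ _
      _ ≤ ‖q‖ * (t * ‖v‖) := by gcongr; exact hVU v (V.starProjection_apply_mem q)
      _ = t * ‖q‖ * ‖v‖ := by ring
  rcases (norm_nonneg v).eq_or_lt with hv | hv
  · rw [← hv]; positivity
  · exact le_of_mul_le_mul_right h hv

theorem abs_norm_starProjection_sq_sub_le [U.HasOrthogonalProjection]
    [V.HasOrthogonalProjection] (ht0 : 0 ≤ t)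
    (hUV : ∀ u ∈ U, ‖u - V.starProjection u‖ ≤ t * ‖u‖)
    (hVU : ∀ v ∈ V, ‖v - U.starProjection v‖ ≤ t * ‖v‖) (e : E) :
    |‖V.starProjection e‖ ^ 2 - ‖U.starProjection e‖ ^ 2|
      ≤ t ^ 2 * ‖e‖ ^ 2 + 2 * t * (‖U.starProjection e‖ * ‖e - U.starProjection e‖) := by
  set p := U.starProjection e
  set q := e - p
  have hq : q ∈ Uᗮ := U.sub_starProjection_mem_orthogonal e
  have hpq : inner ℝ p q = 0 := inner_right_of_mem_orthogonal (U.starProjection_apply_mem e) hq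
  have hpyth : ‖e‖ ^ 2 = ‖p‖ ^ 2 + ‖q‖ ^ 2 := by
    rw [norm_sub_starProjection_sq]; ring
  have hcross : inner ℝ (V.starProjection p) (V.starProjection q)
      = inner ℝ (V.starProjection p - p) q := by
    rw [inner_sub_left, hpq, sub_zero, ← inner_starProjection_left_eq_right,
      starProjection_eq_self_iff.2 (V.starProjection_apply_mem p)]
  have hsplit : ‖V.starProjection e‖ ^ 2 - ‖p‖ ^ 2
      = ‖V.starProjection q‖ ^ 2 - ‖p - V.starProjection p‖ ^ 2
        + 2 * inner ℝ (V.starProjection p - p) q := by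
    have he : e = p + q := (add_sub_cancel p e).symm
    rw [he, map_add, norm_add_sq_real, hcross, norm_sub_starProjection_sq]
    ring
  have ha := hUV p (U.starProjection_apply_mem e)
  have hb := norm_starProjection_le_of_mem_orthogonal ht0 hVU hq
  have hc : |inner ℝ (V.starProjection p - p) q| ≤ t * (‖p‖ * ‖q‖) := by
    calc |inner ℝ (V.starProjection p - p) q| ≤ ‖p - V.starProjection p‖ * ‖q‖ := by
          rw [← norm_sub_rev]; exact abs_real_inner_le_norm _ _
      _ ≤ t * ‖p‖ * ‖q‖ := by gcongr
      _ = t * (‖p‖ * ‖q‖) := by ring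
  have ha2 : ‖p - V.starProjection p‖ ^ 2 ≤ t ^ 2 * ‖e‖ ^ 2 := by
    nlinarith [pow_le_pow_left₀ (norm_nonneg _) ha 2]
  have hb2 : ‖V.starProjection q‖ ^ 2 ≤ t ^ 2 * ‖e‖ ^ 2 := by
    nlinarith [pow_le_pow_left₀ (norm_nonneg _) hb 2]
  rw [hsplit, abs_le]
  constructor <;> nlinarith [abs_le.1 hc, sq_nonneg ‖V.starProjection q‖,
    sq_nonneg ‖p - V.starProjection p‖]

theorem norm_sub_starProjection_le_of_range_add_le {F : Type*}
    [NormedAddCommGroup F] [InnerProductSpace ℝ F]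
    {f g : F →ₗ[ℝ] E} {h : E →ₗ[ℝ] F} (hhf : ∀ y, h (f y) = y) {a b : ℝ} (ha : 0 ≤ a)
    (hg : ∀ y, ‖g y‖ ≤ a * ‖y‖) (hh : ∀ u, ‖h u‖ ≤ b * ‖u‖)
    [V.HasOrthogonalProjection] (hV : LinearMap.range (f + g) ≤ V) :
    ∀ u ∈ LinearMap.range f, ‖u - V.starProjection u‖ ≤ a * b * ‖u‖ := by
  rintro _ ⟨y, rfl⟩
  have hfix : V.starProjection ((f + g) y) = (f + g) y :=
    starProjection_eq_self_iff.2 (hV (LinearMap.mem_range_self _ y))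
  have hsplit : f y - V.starProjection (f y) = -(g y - V.starProjection (g y)) := by
    have : f y = (f + g) y - g y := by simp
    rw [this, map_sub, hfix]
    abel
  calc ‖f y - V.starProjection (f y)‖ = ‖g y - V.starProjection (g y)‖ := by
        rw [hsplit, norm_neg]
    _ ≤ ‖g y‖ := norm_sub_starProjection_le _ _
    _ ≤ a * ‖h (f y)‖ := by rw [hhf]; exact hg y
    _ ≤ a * (b * ‖f y‖) := by gcongr; exact hh _
    _ = a * b * ‖f y‖ := by ring

end Submodule

namespace Matrix

variable {m n : ℕ}

theorem mem_range_toEuclideanLin {M : Matrix (Fin m) (Fin n) ℝ}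
    {x : EuclideanSpace ℝ (Fin m)} :
    x ∈ LinearMap.range M.toEuclideanLin ↔ x.ofLp ∈ LinearMap.range M.mulVecLin := by
  constructor
  · rintro ⟨y, rfl⟩
    exact ⟨y.ofLp, rfl⟩
  · rintro ⟨y, hy⟩
    exact ⟨WithLp.toLp 2 y, congrArg (WithLp.toLp 2) hy⟩

theorem range_toEuclideanLin_eq {M N : Matrix (Fin m) (Fin n) ℝ}
    (h : LinearMap.range M.mulVecLin = LinearMap.range N.mulVecLin) :
    LinearMap.range M.toEuclideanLin = LinearMap.range N.toEuclideanLin := by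
  ext x
  rw [mem_range_toEuclideanLin, mem_range_toEuclideanLin, h]

theorem inner_toEuclideanLin (M : Matrix (Fin m) (Fin n) ℝ) (x : EuclideanSpace ℝ (Fin n))
    (y : EuclideanSpace ℝ (Fin m)) :
    inner ℝ (M.toEuclideanLin x) y = inner ℝ x (Mᵀ.toEuclideanLin y) := by
  rw [← conjTranspose_eq_transpose_of_trivial, toEuclideanLin_conjTranspose_eq_adjoint,
    LinearMap.adjoint_inner_right]

variable {Q : Matrix (Fin m) (Fin n) ℝ}

theorem norm_toEuclideanLin_of_transpose_mul_self (hQ : Qᵀ * Q = 1)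
    (x : EuclideanSpace ℝ (Fin n)) :
    ‖Q.toEuclideanLin x‖ = ‖x‖ := by
  have : ‖Q.toEuclideanLin x‖ ^ 2 = ‖x‖ ^ 2 := by
    rw [← real_inner_self_eq_norm_sq, inner_toEuclideanLin, ← LinearMap.comp_apply,
      ← toLpLin_mul_same, hQ, toLpLin_one, LinearMap.id_apply, real_inner_self_eq_norm_sq]
  exact (pow_left_inj₀ (norm_nonneg _) (norm_nonneg _) two_ne_zero).1 this

theorem finrank_range_toEuclideanLin (hQ : Qᵀ * Q = 1) :
    Module.finrank ℝ (LinearMap.range Q.toEuclideanLin) = n := by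
  let L : EuclideanSpace ℝ (Fin n) →ₗᵢ[ℝ] EuclideanSpace ℝ (Fin m) :=
    ⟨Q.toEuclideanLin, norm_toEuclideanLin_of_transpose_mul_self hQ⟩
  rw [LinearMap.finrank_range_of_inj L.injective, finrank_euclideanSpace_fin]

theorem starProjection_range_toEuclideanLin (hQ : Qᵀ * Q = 1) (x : EuclideanSpace ℝ (Fin m)) :
    (LinearMap.range Q.toEuclideanLin).starProjection x
      = Q.toEuclideanLin (Qᵀ.toEuclideanLin x) := by
  refine Submodule.eq_starProjection_of_mem_of_inner_eq_zero (LinearMap.mem_range_self _ _) ?_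
  rintro _ ⟨z, rfl⟩
  rw [real_inner_comm, inner_toEuclideanLin, map_sub, ← LinearMap.comp_apply Qᵀ.toEuclideanLin,
    ← toLpLin_mul_same, hQ, toLpLin_one, LinearMap.id_apply, sub_self, inner_zero_right]

end Matrix

open Matrix

variable {m n : ℕ} {Q : Matrix (Fin m) (Fin n) ℝ}

theorem lev_eq_norm_sq (j : Fin m) :
    lev Q j = ‖Qᵀ.toEuclideanLin (EuclideanSpace.single j 1)‖ ^ 2 := by
  rw [EuclideanSpace.norm_sq_eq, lev]
  congr 1
  ext k
  simp [toLpLin_apply]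

theorem lev_eq_norm_starProjection_sq (hQ : Qᵀ * Q = 1) (j : Fin m) :
    lev Q j
      = ‖(LinearMap.range Q.toEuclideanLin).starProjection (EuclideanSpace.single j 1)‖ ^ 2 := by
  rw [starProjection_range_toEuclideanLin hQ, norm_toEuclideanLin_of_transpose_mul_self hQ,
    lev_eq_norm_sq]

theorem one_sub_lev_eq_norm_sq (hQ : Qᵀ * Q = 1) (j : Fin m) :
    1 - lev Q j = ‖EuclideanSpace.single j 1
      - (LinearMap.range Q.toEuclideanLin).starProjection (EuclideanSpace.single j 1)‖ ^ 2 := by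
  rw [Submodule.norm_sub_starProjection_sq, PiLp.norm_single, norm_one, one_pow,
    lev_eq_norm_starProjection_sq hQ]

theorem pinv_mul_self {A : Matrix (Fin m) (Fin n) ℝ} (hA : A.rank = n) : pinv A * A = 1 := by
  have hsurj : Function.Surjective (Aᵀ * A).mulVecLin := by
    rw [← LinearMap.range_eq_top]
    apply Submodule.eq_top_of_finrank_eq
    rw [Module.finrank_fin_fun, ← rank, rank_transpose_mul_self, hA]
  have hunit : IsUnit (Aᵀ * A) := mulVec_surjective_iff_isUnit.1 hsurj
  rw [pinv, Matrix.mul_assoc, nonsing_inv_mul _ ((isUnit_iff_isUnit_det _).1 hunit)]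

theorem norm_toEuclideanLin_apply_le (M : Matrix (Fin m) (Fin n) ℝ)
    (x : EuclideanSpace ℝ (Fin n)) :
    ‖M.toEuclideanLin x‖ ≤ spec M * ‖x‖ :=
  (LinearMap.toContinuousLinearMap M.toEuclideanLin).le_opNorm x

theorem norm_sub_starProjection_le_spec_mul_spec_pinv {A ΔA : Matrix (Fin m) (Fin n) ℝ}
    (hA : pinv A * A = 1) {V : Submodule ℝ (EuclideanSpace ℝ (Fin m))} [V.HasOrthogonalProjection]
    (hV : LinearMap.range (A + ΔA).toEuclideanLin ≤ V) :
    ∀ u ∈ LinearMap.range A.toEuclideanLin,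
      ‖u - V.starProjection u‖ ≤ spec ΔA * spec (pinv A) * ‖u‖ :=
  Submodule.norm_sub_starProjection_le_of_range_add_le
    (fun y => by rw [← LinearMap.comp_apply, ← toLpLin_mul_same, hA, toLpLin_one]; rfl)
    (norm_nonneg _) (norm_toEuclideanLin_apply_le ΔA) (norm_toEuclideanLin_apply_le (pinv A))
    (by rwa [← map_add])

theorem spec_ne_zero_of_mul_eq_one [NeZero n] {A : Matrix (Fin m) (Fin n) ℝ}
    {B : Matrix (Fin n) (Fin m) ℝ} (hBA : B * A = 1) : spec A ≠ 0 := by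
  intro h
  have hA : A = 0 := by simpa [spec] using h
  simp [hA] at hBA

theorem abs_div_sq_le_of_abs_le {a b d t : ℝ} (ha : 0 < a) (hb : 0 ≤ b)
    (h : |d| ≤ t ^ 2 + 2 * t * (a * b)) :
    |d| / a ^ 2 ≤ (2 * √(b ^ 2 / a ^ 2) + t / a ^ 2) * t := by
  rw [← div_pow, Real.sqrt_sq (div_nonneg hb ha.le), div_le_iff₀ (by positivity)]
  calc |d| ≤ t ^ 2 + 2 * t * (a * b) := h
    _ = (2 * (b / a) + t / a ^ 2) * t * a ^ 2 := by field_simp; ring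

theorem stmt9 {m n : ℕ} (A ΔA : Matrix (Fin m) (Fin n) ℝ)
    (hA : A.rank = n) (hpert : spec ΔA * spec (pinv A) ≤ 1 / 2)
    (Q Qt : Matrix (Fin m) (Fin n) ℝ)
    (hQ : Qᵀ * Q = 1) (hQt : Qtᵀ * Qt = 1)
    (hrQ : LinearMap.range Q.mulVecLin = LinearMap.range A.mulVecLin)
    (hrQt : LinearMap.range Qt.mulVecLin = LinearMap.range (A + ΔA).mulVecLin) :
    ∀ j, 0 < lev Q j →
      |lev Qt j - lev Q j| / lev Q j ≤
        (2 * Real.sqrt ((1 - lev Q j) / lev Q j)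
          + spec A * spec (pinv A) * (spec ΔA / spec A) / lev Q j)
        * (spec A * spec (pinv A) * (spec ΔA / spec A)) := by
  intro j hl
  have hleft : pinv A * A = 1 := pinv_mul_self hA
  have : NeZero n := ⟨by rintro rfl; simp [lev] at hl⟩
  have hκε : spec A * spec (pinv A) * (spec ΔA / spec A) = spec ΔA * spec (pinv A) := by
    field_simp [spec_ne_zero_of_mul_eq_one hleft]
  set t := spec ΔA * spec (pinv A)
  have ht0 : 0 ≤ t := mul_nonneg (norm_nonneg _) (norm_nonneg _)
  have hUV : ∀ u ∈ LinearMap.range Q.toEuclideanLin,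
      ‖u - (LinearMap.range Qt.toEuclideanLin).starProjection u‖ ≤ t * ‖u‖ := by
    rw [range_toEuclideanLin_eq hrQ]
    exact norm_sub_starProjection_le_spec_mul_spec_pinv hleft (range_toEuclideanLin_eq hrQt).ge
  have hVU := Submodule.norm_sub_starProjection_le_of_finrank_eq
    (by rw [finrank_range_toEuclideanLin hQ, finrank_range_toEuclideanLin hQt]) ht0
    (by nlinarith) hUV
  have key := Submodule.abs_norm_starProjection_sq_sub_le ht0 hUV hVU (EuclideanSpace.single j 1)
  rw [PiLp.norm_single, norm_one, one_pow, mul_one] at key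
  rw [lev_eq_norm_starProjection_sq hQ] at hl
  rw [hκε, one_sub_lev_eq_norm_sq hQ, lev_eq_norm_starProjection_sq hQt,
    lev_eq_norm_starProjection_sq hQ]
  exact abs_div_sq_le_of_abs_le ((norm_nonneg _).lt_of_ne' (sq_pos_iff.1 hl)) (norm_nonneg _) key
end

section
/- Let A be a real m×n matrix of rank n with thin QR decomposition A = QR (Q having orthonormal columns, R upper triangular invertible). If Ṙ is upper triangular and satisfies Ṙᵀ R + Rᵀ Ṙ = (ΔA)ᵀA + AᵀΔA for some m×n matrix ΔA, then ‖Ṙ R⁻¹‖_F ≤ √2 ‖Qᵀ ΔA R⁻¹‖_F ≤ √2 ‖ΔA‖_F ‖R⁻¹‖₂. -/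
open Matrix

open scoped Matrix.Norms.L2Operator

lemma spec_eq {m n : ℕ} (A : Matrix (Fin m) (Fin n) ℝ) : spec A = ‖A‖ := rfl

lemma spec_transpose {m n : ℕ} (A : Matrix (Fin m) (Fin n) ℝ) : spec Aᵀ = spec A := by
  have := Matrix.l2_opNorm_conjTranspose A
  rwa [conjTranspose_eq_transpose_of_trivial] at this

lemma euc_norm_sq {k : ℕ} (v : Fin k → ℝ) :
    ‖(EuclideanSpace.equiv (Fin k) ℝ).symm v‖ ^ 2 = ∑ i, (v i) ^ 2 := by
  rw [EuclideanSpace.norm_eq, Real.sq_sqrt (by positivity)]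
  simp [sq_abs]

lemma mulVec_norm_le {p k : ℕ} (C : Matrix (Fin p) (Fin k) ℝ) (v : Fin k → ℝ) :
    ∑ i, (C *ᵥ v) i ^ 2 ≤ spec C ^ 2 * ∑ i, (v i) ^ 2 := by
  have h := Matrix.l2_opNorm_mulVec C ((EuclideanSpace.equiv (Fin k) ℝ).symm v)
  have h2 : ‖(EuclideanSpace.equiv (Fin p) ℝ).symm (C *ᵥ v)‖ ^ 2 ≤
      (‖C‖ * ‖(EuclideanSpace.equiv (Fin k) ℝ).symm v‖) ^ 2 := by
    apply pow_le_pow_left₀ (norm_nonneg _) _ 2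
    simpa using h
  rw [mul_pow] at h2
  rw [euc_norm_sq] at h2
  rw [euc_norm_sq] at h2
  · simpa [spec_eq] using h2

lemma frob_nonneg {m n : ℕ} (A : Matrix (Fin m) (Fin n) ℝ) : 0 ≤ frob A := Real.sqrt_nonneg _

lemma frob_mul_le_right {p k q : ℕ} (B : Matrix (Fin p) (Fin k) ℝ) (C : Matrix (Fin k) (Fin q) ℝ) :
    frob (B * C) ≤ frob B * spec C := by
  have key : ∑ i, ∑ j, ((B * C) i j) ^ 2 ≤ spec C ^ 2 * ∑ i, ∑ j, (B i j) ^ 2 := by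
    rw [Finset.mul_sum]
    apply Finset.sum_le_sum
    intro i _
    have := mulVec_norm_le Cᵀ (B i)
    rw [spec_transpose] at this
    refine le_trans (le_of_eq ?_) this
    apply Finset.sum_congr rfl
    intro j _
    congr 1
    simp [Matrix.mul_apply, Matrix.mulVec, dotProduct, mul_comm]
  have h1 : frob (B * C) ≤ Real.sqrt (spec C ^ 2 * ∑ i, ∑ j, (B i j) ^ 2) :=
    Real.sqrt_le_sqrt key
  refine h1.trans (le_of_eq ?_)
  rw [Real.sqrt_mul (by positivity), Real.sqrt_sq (by rw [spec_eq]; exact norm_nonneg _), mul_comm]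
  rfl

lemma frob_mul_le_left {p k q : ℕ} (C : Matrix (Fin p) (Fin k) ℝ) (B : Matrix (Fin k) (Fin q) ℝ) :
    frob (C * B) ≤ spec C * frob B := by
  have key : ∑ i, ∑ j, ((C * B) i j) ^ 2 ≤ spec C ^ 2 * ∑ i, ∑ j, (B i j) ^ 2 := by
    rw [Finset.sum_comm]
    have h2 : (∑ i, ∑ j, (B i j)^2 : ℝ) = ∑ j, ∑ i, (B i j)^2 := Finset.sum_comm
    rw [h2, Finset.mul_sum]
    apply Finset.sum_le_sum
    intro j _
    have := mulVec_norm_le C (fun i => B i j)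
    refine le_trans (le_of_eq ?_) this
    apply Finset.sum_congr rfl
    intro i _
    rfl
  have h1 : frob (C * B) ≤ Real.sqrt (spec C ^ 2 * ∑ i, ∑ j, (B i j) ^ 2) :=
    Real.sqrt_le_sqrt key
  refine h1.trans (le_of_eq ?_)
  rw [Real.sqrt_mul (by positivity), Real.sqrt_sq (by rw [spec_eq]; exact norm_nonneg _)]
  rfl

lemma spec_one_le {k : ℕ} : spec (1 : Matrix (Fin k) (Fin k) ℝ) ≤ 1 := by
  have h := Matrix.l2_opNorm_conjTranspose_mul_self (1 : Matrix (Fin k) (Fin k) ℝ)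
  rw [conjTranspose_one, one_mul] at h
  have h0 : (0:ℝ) ≤ spec (1 : Matrix (Fin k) (Fin k) ℝ) := by rw [spec_eq]; exact norm_nonneg _
  rw [spec_eq]
  rw [spec_eq] at h0
  nlinarith [h, h0]

lemma spec_Q_le {m k : ℕ} (Q : Matrix (Fin m) (Fin k) ℝ) (hQ : Qᵀ * Q = 1) : spec Qᵀ ≤ 1 := by
  have h := Matrix.l2_opNorm_conjTranspose_mul_self Q
  rw [conjTranspose_eq_transpose_of_trivial, hQ] at h
  have h1 := spec_one_le (k := k)
  rw [spec_transpose, spec_eq]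
  rw [spec_eq] at h1
  nlinarith [norm_nonneg Q, h, h1]

lemma frob_triang_le {k : ℕ} (F S : Matrix (Fin k) (Fin k) ℝ)
    (hF : ∀ i j : Fin k, j < i → F i j = 0)
    (key : Fᵀ + F = Sᵀ + S) : frob F ≤ Real.sqrt 2 * frob S := by
  set sF : ℝ := ∑ i, ∑ j, (F i j)^2 with hsF
  set sS : ℝ := ∑ i, ∑ j, (S i j)^2 with hsS
  have keyij : ∀ i j, F j i + F i j = S j i + S i j := by
    intro i j
    have := congrFun (congrFun key i) j
    simpa [Matrix.add_apply, Matrix.transpose_apply] using this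
  -- expansion identity for F
  have e1 : ∑ i, ∑ j, (F j i + F i j)^2
      = 2 * sF + 2 * ∑ i, ∑ j, F i j * F j i := by
    have : ∀ i j : Fin k, (F j i + F i j)^2 = F j i ^2 + F i j ^2 + 2 * (F i j * F j i) := by
      intro i j; ring
    simp_rw [this, Finset.sum_add_distrib, ← Finset.mul_sum]
    have hc : (∑ i, ∑ j, (F j i)^2 : ℝ) = sF := Finset.sum_comm
    rw [hc]; ring
  have cross_nonneg : (0:ℝ) ≤ ∑ i, ∑ j, F i j * F j i := by
    apply Finset.sum_nonneg; intro i _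
    apply Finset.sum_nonneg; intro j _
    rcases lt_trichotomy i j with h | h | h
    · rw [hF j i h]; simp
    · subst h; exact mul_self_nonneg _
    · rw [hF i j h]; simp
  have e2 : ∑ i, ∑ j, (S j i + S i j)^2 ≤ 4 * sS := by
    have hb : ∀ i j : Fin k, (S j i + S i j)^2 ≤ 2 * (S j i)^2 + 2 * (S i j)^2 := by
      intro i j; nlinarith [sq_nonneg (S j i - S i j)]
    calc ∑ i, ∑ j, (S j i + S i j)^2 ≤ ∑ i, ∑ j, (2 * (S j i)^2 + 2 * (S i j)^2) := by
          apply Finset.sum_le_sum; intro i _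
          apply Finset.sum_le_sum; intro j _
          exact hb i j
      _ = 4 * sS := by
          simp_rw [Finset.sum_add_distrib, ← Finset.mul_sum]
          have hc : (∑ i, ∑ j, (S j i)^2 : ℝ) = sS := Finset.sum_comm
          rw [hc]; ring
  have ekey : ∑ i, ∑ j, (F j i + F i j)^2 = ∑ i, ∑ j, (S j i + S i j)^2 := by
    apply Finset.sum_congr rfl; intro i _
    apply Finset.sum_congr rfl; intro j _
    rw [keyij i j]
  have hfin : sF ≤ 2 * sS := by nlinarith [e1, e2, ekey, cross_nonneg]
  have : frob F ≤ Real.sqrt (2 * sS) := Real.sqrt_le_sqrt hfin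
  refine this.trans (le_of_eq ?_)
  rw [Real.sqrt_mul (by norm_num)]
  rfl

theorem stmt13 {m n : ℕ} (A ΔA Q : Matrix (Fin m) (Fin n) ℝ)
    (R Rdot : Matrix (Fin n) (Fin n) ℝ)
    (hrank : A.rank = n)
    (hQR : A = Q * R) (hQ : Qᵀ * Q = 1)
    (hR : R.BlockTriangular id) (hRdet : IsUnit R.det)
    (hRdot : Rdot.BlockTriangular id)
    (heq : Rdotᵀ * R + Rᵀ * Rdot = ΔAᵀ * A + Aᵀ * ΔA) :
    frob (Rdot * R⁻¹) ≤ Real.sqrt 2 * frob (Qᵀ * ΔA * R⁻¹) ∧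
    Real.sqrt 2 * frob (Qᵀ * ΔA * R⁻¹) ≤ Real.sqrt 2 * frob ΔA * spec R⁻¹ := by
  have hRR : R * R⁻¹ = 1 := Matrix.mul_nonsing_inv R hRdet
  have hT : (R⁻¹)ᵀ * Rᵀ = 1 := by rw [← Matrix.transpose_mul, hRR, Matrix.transpose_one]
  have hswap : ∀ X : Matrix (Fin n) (Fin n) ℝ, (R⁻¹)ᵀ * (Rᵀ * X) = X := fun X => by
    rw [← Matrix.mul_assoc, hT, Matrix.one_mul]
  have key : (Rdot * R⁻¹)ᵀ + Rdot * R⁻¹ = (Qᵀ * ΔA * R⁻¹)ᵀ + Qᵀ * ΔA * R⁻¹ := by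
    have h := congrArg (fun X => (R⁻¹)ᵀ * X * R⁻¹) heq
    simp only [hQR, Matrix.mul_add, Matrix.add_mul, Matrix.mul_assoc, Matrix.transpose_mul,
      Matrix.transpose_transpose, hRR, Matrix.mul_one, hswap] at h ⊢
    exact h
  have hFtri : (Rdot * R⁻¹).BlockTriangular id := by
    have : Invertible R := R.invertibleOfIsUnitDet hRdet
    exact hRdot.mul (Matrix.blockTriangular_inv_of_blockTriangular hR)
  constructor
  · exact frob_triang_le _ _ (fun i j hij => hFtri hij) key
  · rw [mul_assoc]
    apply mul_le_mul_of_nonneg_left _ (Real.sqrt_nonneg 2)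
    calc frob (Qᵀ * ΔA * R⁻¹) ≤ frob (Qᵀ * ΔA) * spec R⁻¹ := frob_mul_le_right _ _
      _ ≤ frob ΔA * spec R⁻¹ := by
          apply mul_le_mul_of_nonneg_right _ (by rw [spec_eq]; exact norm_nonneg _)
          calc frob (Qᵀ * ΔA) ≤ spec Qᵀ * frob ΔA := frob_mul_le_left _ _
            _ ≤ 1 * frob ΔA :=
                mul_le_mul_of_nonneg_right (spec_Q_le Q hQ) (frob_nonneg _)
            _ = frob ΔA := one_mul _
end
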